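/- arXiv:2405.11400 — 4 statements merged into one kernel-verified Lean document; each statement's English description precedes it below -/
import Mathlib

section
/- Let x ∈ ℝⁿ with positive entries, d ∈ ℝⁿ, τ ∈ (0,1), and suppose α ∈ (0,1] satisfies x + α d ≥ (1−τ)x componentwise (the fraction-to-the-boundary condition). Then −(∑_{i=1}^n log(x_i + α d_i) − ∑_{i=1}^n log(x_i) − α ∑_{i=1}^n d_i/x_i) ≤ α² (1/(1−τ)) ‖X⁻¹ d‖², where X = diag(x). -/
/-! Writing `x + αd = x (1 + t)` with `t = α d / x` reduces the bound to one coordinate, where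
it is `t - log (1 + t) ≤ t² / (1 + t)`, i.e. `log u ≥ 1 - u⁻¹` at `u = 1 + t`; the
fraction-to-the-boundary condition says `1 + t ≥ 1 - τ`. -/

open Finset

namespace Real

lemma sub_log_one_add_le_sq_div {t c : ℝ} (hc : 0 < c) (hct : c ≤ 1 + t) :
    t - log (1 + t) ≤ t ^ 2 / c := by
  have ht : 0 < 1 + t := hc.trans_le hct
  calc t - log (1 + t) ≤ t - (1 - (1 + t)⁻¹) := by
        linarith [one_sub_inv_le_log_of_pos ht]
    _ = t ^ 2 / (1 + t) := by field_simp; ring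
    _ ≤ t ^ 2 / c := div_le_div_of_nonneg_left (sq_nonneg t) hc hct

lemma div_sub_log_sub_log_le {x y c : ℝ} (hx : 0 < x) (hc : 0 < c) (h : c * x ≤ x + y) :
    y / x - (log (x + y) - log x) ≤ (y / x) ^ 2 / c := by
  have hsplit : x + y = x * (1 + y / x) := by field_simp
  have hct : c ≤ 1 + y / x := by
    rw [hsplit] at h
    exact le_of_mul_le_mul_left (by linarith) hx
  rw [hsplit, log_mul hx.ne' (hc.trans_le hct).ne', add_sub_cancel_left]
  exact sub_log_one_add_le_sq_div hc hct

end Real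

theorem stmt_2_general (n : ℕ) (x d : Fin n → ℝ) (τ α : ℝ)
    (hx : ∀ i, 0 < x i) (hτ1 : τ < 1)
    (hftb : ∀ i, (1 - τ) * x i ≤ x i + α * d i) :
    -((∑ i, Real.log (x i + α * d i)) - (∑ i, Real.log (x i)) - α * ∑ i, d i / x i) ≤
      α ^ 2 * (1 / (1 - τ)) * ∑ i, (d i / x i) ^ 2 := by
  have hτ : 0 < 1 - τ := sub_pos.mpr hτ1
  calc -((∑ i, Real.log (x i + α * d i)) - (∑ i, Real.log (x i)) - α * ∑ i, d i / x i)
      = ∑ i, (α * d i / x i - (Real.log (x i + α * d i) - Real.log (x i))) := by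
        simp only [sum_sub_distrib, mul_div_assoc, mul_sum]; ring
    _ ≤ ∑ i, (α * d i / x i) ^ 2 / (1 - τ) :=
        sum_le_sum fun i _ => Real.div_sub_log_sub_log_le (hx i) hτ (hftb i)
    _ = α ^ 2 * (1 / (1 - τ)) * ∑ i, (d i / x i) ^ 2 := by
        rw [mul_sum]; congr 1 with i; ring

/-- Log-barrier curvature bound (Lemma 3.1): if `x > 0`, `τ ∈ (0,1)`, `α ∈ (0,1]` and
`x + αd ≥ (1-τ)x` componentwise, then
`-(∑ log(xᵢ+αdᵢ) - ∑ log xᵢ - α ∑ dᵢ/xᵢ) ≤ α² (1/(1-τ)) ‖X⁻¹d‖²`. -/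
theorem stmt_2 (n : ℕ) (x d : Fin n → ℝ) (τ α : ℝ)
    (hx : ∀ i, 0 < x i) (hτ0 : 0 < τ) (hτ1 : τ < 1)
    (hα0 : 0 < α) (hα1 : α ≤ 1)
    (hftb : ∀ i, (1 - τ) * x i ≤ x i + α * d i) :
    -((∑ i, Real.log (x i + α * d i)) - (∑ i, Real.log (x i)) - α * ∑ i, d i / x i) ≤
      α ^ 2 * (1 / (1 - τ)) * ∑ i, (d i / x i) ^ 2 :=
  stmt_2_general n x d τ α hx hτ1 hftb
end

section
/- Let M₀, M₁, M₂ > 0 and ε_H, ε_g ≥ 0 satisfy M₁ ε_H < 1 and ε_g ≤ (1 − M₁ε_H)²/(4 M₀ M₂). Set Δ = (1 − M₁ε_H)² − 4M₀M₂ε_g and δ⁻ = ((1 − M₁ε_H) − √Δ)/(2M₂). Then Δ ≥ 0, δ⁻ ≥ 0, and M₀ ε_g ≤ δ⁻. -/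
/-- Let `M₀, M₁, M₂ > 0` and `ε_H, ε_g ≥ 0` with `M₁ε_H < 1` and
`ε_g ≤ (1 - M₁ε_H)²/(4M₀M₂)`. With `Δ = (1 - M₁ε_H)² - 4M₀M₂ε_g` and
`δ⁻ = ((1 - M₁ε_H) - √Δ)/(2M₂)`, one has `Δ ≥ 0`, `δ⁻ ≥ 0`, and `M₀ε_g ≤ δ⁻`. -/
theorem stmt_8 (M₀ M₁ M₂ εH εg : ℝ) (h₀ : 0 < M₀) (h₁ : 0 < M₁) (h₂ : 0 < M₂)
    (hεH : 0 ≤ εH) (hεg : 0 ≤ εg) (hM1 : M₁ * εH < 1)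
    (hbound : εg ≤ (1 - M₁ * εH) ^ 2 / (4 * M₀ * M₂)) :
    0 ≤ (1 - M₁ * εH) ^ 2 - 4 * M₀ * M₂ * εg ∧
    0 ≤ ((1 - M₁ * εH) - Real.sqrt ((1 - M₁ * εH) ^ 2 - 4 * M₀ * M₂ * εg)) / (2 * M₂) ∧
    M₀ * εg ≤
      ((1 - M₁ * εH) - Real.sqrt ((1 - M₁ * εH) ^ 2 - 4 * M₀ * M₂ * εg)) / (2 * M₂) := by
  set a := 1 - M₁ * εH with ha
  have ha0 : 0 < a := by simp [ha]; linarith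
  have ha1 : a ≤ 1 := by
    have : 0 ≤ M₁ * εH := mul_nonneg h₁.le hεH
    simp [ha]; linarith
  have hΔ : 0 ≤ a ^ 2 - 4 * M₀ * M₂ * εg := by
    have h4 : 0 < 4 * M₀ * M₂ := by positivity
    nlinarith [(le_div_iff₀ h4).mp hbound]
  have hc : 0 ≤ M₀ * M₂ * εg := by positivity
  -- √Δ ≤ a - 2M₀M₂εg
  have hkey : Real.sqrt (a ^ 2 - 4 * M₀ * M₂ * εg) ≤ a - 2 * (M₀ * M₂ * εg) := by
    have hnn : 0 ≤ a - 2 * (M₀ * M₂ * εg) := by nlinarith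
    have hsq : a ^ 2 - 4 * M₀ * M₂ * εg ≤ (a - 2 * (M₀ * M₂ * εg)) ^ 2 := by
      nlinarith
    calc Real.sqrt (a ^ 2 - 4 * M₀ * M₂ * εg)
        ≤ Real.sqrt ((a - 2 * (M₀ * M₂ * εg)) ^ 2) := Real.sqrt_le_sqrt hsq
      _ = a - 2 * (M₀ * M₂ * εg) := Real.sqrt_sq hnn
  refine ⟨hΔ, ?_, ?_⟩
  · apply div_nonneg _ (by linarith)
    have := Real.sqrt_nonneg (a ^ 2 - 4 * M₀ * M₂ * εg)
    nlinarith
  · rw [le_div_iff₀ (by linarith : (0:ℝ) < 2 * M₂)]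
    nlinarith
end

section
/- Let H be a symmetric n×n matrix partitioned by a set I ⊆ {1,…,n} and its complement A, with ‖H‖ ≤ M_H, and suppose the principal submatrix H_{II} satisfies v_Iᵀ H_{II} v_I ≥ λ‖v_I‖² for all v_I, with λ > 0. Let M_A ∈ (0,1) be the positive root of t ↦ −(λ + M_H)t² − 2M_H t + λ. Then for every unit vector v = (v_A, v_I) with ‖v_A‖ ≤ M_A (so that ‖v_I‖ ≤ 1), one has vᵀH v ≥ v_Iᵀ H_{II} v_I − M_H‖v_A‖² − 2M_H‖v_I‖‖v_A‖ ≥ λ‖v_I‖² − M_H‖v_A‖² − 2M_H‖v_I‖‖v_A‖ ≥ 0. -/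
open Matrix

lemma sum_sq_smul {n : ℕ} (c : ℝ) (x : Fin n → ℝ) :
    ∑ i, (c • x) i ^ 2 = c ^ 2 * ∑ i, x i ^ 2 := by
  simp [Finset.mul_sum, mul_pow]

lemma symm_bilin_bound {n : ℕ} (H : Matrix (Fin n) (Fin n) ℝ) (MH : ℝ) (hMH : 0 ≤ MH)
    (hHbnd : ∀ v : Fin n → ℝ, |v ⬝ᵥ H.mulVec v| ≤ MH * ∑ i, v i ^ 2)
    (x y : Fin n → ℝ) :
    |x ⬝ᵥ H.mulVec y + y ⬝ᵥ H.mulVec x| ≤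
      2 * MH * Real.sqrt (∑ i, x i ^ 2) * Real.sqrt (∑ i, y i ^ 2) := by
  -- first the unscaled bound
  have key : ∀ a b : Fin n → ℝ,
      |a ⬝ᵥ H.mulVec b + b ⬝ᵥ H.mulVec a| ≤ MH * (∑ i, a i ^ 2) + MH * (∑ i, b i ^ 2) := by
    intro a b
    have h1 := hHbnd (a + b)
    have h2 := hHbnd (a - b)
    have e1 : (a + b) ⬝ᵥ H.mulVec (a + b) =
        a ⬝ᵥ H.mulVec a + (a ⬝ᵥ H.mulVec b + b ⬝ᵥ H.mulVec a) + b ⬝ᵥ H.mulVec b := by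
      simp [mulVec_add, dotProduct_add, add_dotProduct]; ring
    have e2 : (a - b) ⬝ᵥ H.mulVec (a - b) =
        a ⬝ᵥ H.mulVec a - (a ⬝ᵥ H.mulVec b + b ⬝ᵥ H.mulVec a) + b ⬝ᵥ H.mulVec b := by
      simp [mulVec_sub, dotProduct_sub, sub_dotProduct]; ring
    have s1 : ∑ i, (a + b) i ^ 2 = ∑ i, a i ^ 2 + 2 * ∑ i, a i * b i + ∑ i, b i ^ 2 := by
      rw [Finset.mul_sum, ← Finset.sum_add_distrib, ← Finset.sum_add_distrib]
      congr 1; funext i; simp [Pi.add_apply]; ring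
    have s2 : ∑ i, (a - b) i ^ 2 = ∑ i, a i ^ 2 - 2 * ∑ i, a i * b i + ∑ i, b i ^ 2 := by
      rw [Finset.mul_sum, ← Finset.sum_sub_distrib, ← Finset.sum_add_distrib]
      congr 1; funext i; simp [Pi.sub_apply]; ring
    rw [e1, s1] at h1
    rw [e2, s2] at h2
    have h1' := abs_le.mp h1
    have h2' := abs_le.mp h2
    rw [abs_le]
    constructor <;> nlinarith [h1'.1, h1'.2, h2'.1, h2'.2]
  set sa := ∑ i, x i ^ 2 with hsa
  set sb := ∑ i, y i ^ 2 with hsb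
  have hsa0 : 0 ≤ sa := Finset.sum_nonneg fun i _ => sq_nonneg _
  have hsb0 : 0 ≤ sb := Finset.sum_nonneg fun i _ => sq_nonneg _
  rcases eq_or_lt_of_le hsa0 with h | hsa'
  · -- sa = 0 ⇒ x = 0
    have hx : x = 0 := by
      funext i
      have := (Finset.sum_eq_zero_iff_of_nonneg (fun i _ => sq_nonneg (x i))).mp h.symm i (Finset.mem_univ i)
      exact pow_eq_zero_iff (by norm_num) |>.mp this
    simp [hx, ← h]
  rcases eq_or_lt_of_le hsb0 with h | hsb'
  · have hy : y = 0 := by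
      funext i
      have := (Finset.sum_eq_zero_iff_of_nonneg (fun i _ => sq_nonneg (y i))).mp h.symm i (Finset.mem_univ i)
      exact pow_eq_zero_iff (by norm_num) |>.mp this
    simp [hy, ← h]
  -- both positive: scale
  set a := Real.sqrt sa with ha
  set b := Real.sqrt sb with hb
  have ha0 : 0 < a := Real.sqrt_pos.mpr hsa'
  have hb0 : 0 < b := Real.sqrt_pos.mpr hsb'
  have ha2 : a ^ 2 = sa := Real.sq_sqrt hsa0
  have hb2 : b ^ 2 = sb := Real.sq_sqrt hsb0
  set c := Real.sqrt (b / a) with hc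
  have hc0 : 0 < c := Real.sqrt_pos.mpr (div_pos hb0 ha0)
  have hc2 : c ^ 2 = b / a := Real.sq_sqrt (div_pos hb0 ha0).le
  have hk := key (c • x) (c⁻¹ • y)
  have eS : (c • x) ⬝ᵥ H.mulVec (c⁻¹ • y) + (c⁻¹ • y) ⬝ᵥ H.mulVec (c • x) =
      x ⬝ᵥ H.mulVec y + y ⬝ᵥ H.mulVec x := by
    rw [smul_dotProduct, smul_dotProduct, mulVec_smul, mulVec_smul, dotProduct_smul, dotProduct_smul]
    field_simp
    rw [smul_smul, smul_smul, one_div, mul_inv_cancel₀ hc0.ne', inv_mul_cancel₀ hc0.ne', one_smul, one_smul]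
  rw [eS, sum_sq_smul, sum_sq_smul, hc2] at hk
  have hinv : (c⁻¹) ^ 2 = a / b := by
    rw [inv_pow, hc2]; field_simp
  rw [hinv, ← hsa, ← hsb, ← ha2, ← hb2] at hk
  calc |x ⬝ᵥ H.mulVec y + y ⬝ᵥ H.mulVec x| ≤
      MH * (b / a * a ^ 2) + MH * (a / b * b ^ 2) := hk
    _ = 2 * MH * a * b := by field_simp; ring

/-- Case (i) of the uniform positive definiteness argument: `H` symmetric with
`‖H‖ ≤ M_H` (via the Rayleigh quotient) and `H_{II} ⪰ λ` on vectors supported on `I`;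
`M_A ∈ (0,1)` the positive root of `-(λ+M_H)t² - 2M_H t + λ`.  For every unit vector
`v` with `‖v_A‖ ≤ M_A` (where `v_I`, `v_A` are the restrictions of `v` to `I` and its
complement),
`vᵀHv ≥ v_IᵀHv_I - M_H‖v_A‖² - 2M_H‖v_I‖‖v_A‖ ≥ λ‖v_I‖² - M_H‖v_A‖² - 2M_H‖v_I‖‖v_A‖ ≥ 0`. -/
theorem stmt_17 (n : ℕ) (H : Matrix (Fin n) (Fin n) ℝ) (hH : H.IsSymm)
    (I : Finset (Fin n)) (MH lam MA : ℝ) (hMH : 0 < MH) (hlam : 0 < lam)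
    (hHbnd : ∀ v : Fin n → ℝ, |v ⬝ᵥ H.mulVec v| ≤ MH * ∑ i, v i ^ 2)
    (hII : ∀ v : Fin n → ℝ, (∀ i, i ∉ I → v i = 0) →
      lam * ∑ i, v i ^ 2 ≤ v ⬝ᵥ H.mulVec v)
    (hMA0 : 0 < MA) (hMA1 : MA < 1)
    (hroot : -(lam + MH) * MA ^ 2 - 2 * MH * MA + lam = 0)
    (v : Fin n → ℝ) (hunit : ∑ i, v i ^ 2 = 1)
    (hvA : Real.sqrt (∑ i, (if i ∈ I then 0 else v i) ^ 2) ≤ MA) :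
    ((fun i => if i ∈ I then v i else 0) ⬝ᵥ
        H.mulVec (fun i => if i ∈ I then v i else 0))
        - MH * (∑ i, (if i ∈ I then 0 else v i) ^ 2)
        - 2 * MH * Real.sqrt (∑ i, (if i ∈ I then v i else 0) ^ 2) *
            Real.sqrt (∑ i, (if i ∈ I then 0 else v i) ^ 2)
      ≤ v ⬝ᵥ H.mulVec v ∧
    lam * (∑ i, (if i ∈ I then v i else 0) ^ 2)
        - MH * (∑ i, (if i ∈ I then 0 else v i) ^ 2)
        - 2 * MH * Real.sqrt (∑ i, (if i ∈ I then v i else 0) ^ 2) *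
            Real.sqrt (∑ i, (if i ∈ I then 0 else v i) ^ 2)
      ≤ ((fun i => if i ∈ I then v i else 0) ⬝ᵥ
          H.mulVec (fun i => if i ∈ I then v i else 0))
        - MH * (∑ i, (if i ∈ I then 0 else v i) ^ 2)
        - 2 * MH * Real.sqrt (∑ i, (if i ∈ I then v i else 0) ^ 2) *
            Real.sqrt (∑ i, (if i ∈ I then 0 else v i) ^ 2) ∧
    0 ≤ lam * (∑ i, (if i ∈ I then v i else 0) ^ 2)
        - MH * (∑ i, (if i ∈ I then 0 else v i) ^ 2)
        - 2 * MH * Real.sqrt (∑ i, (if i ∈ I then v i else 0) ^ 2) *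
            Real.sqrt (∑ i, (if i ∈ I then 0 else v i) ^ 2) := by
  classical
  set vI : Fin n → ℝ := fun i => if i ∈ I then v i else 0 with hvIdef
  set vA : Fin n → ℝ := fun i => if i ∈ I then 0 else v i with hvAdef
  have esI : (∑ i, (if i ∈ I then v i else 0) ^ 2) = ∑ i, vI i ^ 2 := rfl
  have esA : (∑ i, (if i ∈ I then 0 else v i) ^ 2) = ∑ i, vA i ^ 2 := rfl
  rw [esI, esA] at *
  set sI := ∑ i, vI i ^ 2 with hsIdef
  set sA := ∑ i, vA i ^ 2 with hsAdef
  have hsI0 : 0 ≤ sI := Finset.sum_nonneg fun i _ => sq_nonneg _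
  have hsA0 : 0 ≤ sA := Finset.sum_nonneg fun i _ => sq_nonneg _
  have hsplit : v = vI + vA := by
    funext i; by_cases h : i ∈ I <;> simp [hvIdef, hvAdef, h]
  have hsum : sI + sA = 1 := by
    rw [hsIdef, hsAdef, ← Finset.sum_add_distrib, ← hunit]
    congr 1; funext i; by_cases h : i ∈ I <;> simp [hvIdef, hvAdef, h]
  set a := Real.sqrt sI with hadef
  set b := Real.sqrt sA with hbdef
  have ha2 : a ^ 2 = sI := Real.sq_sqrt hsI0
  have hb2 : b ^ 2 = sA := Real.sq_sqrt hsA0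
  have ha0 : 0 ≤ a := Real.sqrt_nonneg _
  have hb0 : 0 ≤ b := Real.sqrt_nonneg _
  have hq : v ⬝ᵥ H.mulVec v =
      vI ⬝ᵥ H.mulVec vI + (vI ⬝ᵥ H.mulVec vA + vA ⬝ᵥ H.mulVec vI) + vA ⬝ᵥ H.mulVec vA := by
    rw [hsplit]; simp [mulVec_add, dotProduct_add, add_dotProduct]; ring
  have hS := symm_bilin_bound H MH hMH.le hHbnd vI vA
  rw [← hsIdef, ← hsAdef, ← hadef, ← hbdef] at hS
  have hqA := hHbnd vA
  rw [← hsAdef] at hqA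
  have hS' := (abs_le.mp hS).1
  have hqA' := (abs_le.mp hqA).1
  refine ⟨by rw [hq]; linarith, ?_, ?_⟩
  · have hIIv := hII vI (fun i hi => by simp [hvIdef, hi])
    rw [← hsIdef] at hIIv
    linarith
  · have hb' : b ≤ MA := hvA
    have ha1 : a ≤ 1 := by nlinarith
    nlinarith [mul_nonneg hMH.le (mul_nonneg hb0 (sub_nonneg.mpr ha1)),
      mul_nonneg (mul_nonneg (sub_nonneg.mpr hb') (by linarith : (0:ℝ) ≤ MA + b))
        (by linarith : (0:ℝ) ≤ lam + MH),
      mul_nonneg hMH.le (sub_nonneg.mpr hb')]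
end

section
/- Let φ: (0,∞)ⁿ → ℝ be the barrier function φ(x) = f(x) − μ ∑_i log x_i with μ > 0, and let x have positive entries, d ∈ ℝⁿ, α ∈ (0,1] satisfy x + αd ≥ (1−τ)x componentwise for τ ∈ (0,1). Suppose f is twice continuously differentiable on a convex open set containing the segment [x, x+αd]. Then φ(x + αd) − φ(x) ≤ α ∇φ(x)ᵀd + (α²/2) dᵀ H̆ d + (μ/(1−τ)) α² ‖X⁻¹d‖², for some H̆ = ∇²f(x + ᾰ d) with ᾰ ∈ (0,1). -/
/-!
The barrier function splits into `f` and `-μ ∑ log xᵢ`. Along the segment `t ↦ x + t d`, `f` obeys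
Taylor's theorem with Lagrange remainder. For the barrier, write `x + α d = x (1 + t)` coordinatewise
with `t = α d / x`; then `log (1 + t) ≥ 1 - (1 + t)⁻¹` gives `t - log (1 + t) ≤ t² / (1 + t)`, and
the fraction-to-the-boundary rule `1 + t ≥ 1 - τ` bounds this by `t² / (1 - τ)`.
-/

open Set Real

theorem taylor_lagrange_two_of_hasDerivAt {g g' g'' : ℝ → ℝ} {a b : ℝ} (hab : a < b)
    (hg : ∀ t ∈ Icc a b, HasDerivAt g (g' t) t)
    (hg' : ∀ t ∈ Icc a b, HasDerivAt g' (g'' t) t) :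
    ∃ c ∈ Ioo a b, g b = g a + (b - a) * g' a + (b - a) ^ 2 / 2 * g'' c := by
  -- Cauchy's mean value theorem for `t ↦ g t + (b - t) g' t` against `t ↦ (b - t)²`.
  have hF : ∀ t ∈ Icc a b,
      HasDerivAt (fun t => g t + (b - t) * g' t) ((b - t) * g'' t) t := fun t ht =>
    ((hg t ht).fun_add ((hasDerivAt_id' t).const_sub b |>.fun_mul (hg' t ht))).congr_deriv
      (by ring)
  have hG : ∀ t : ℝ, HasDerivAt (fun t => (b - t) ^ 2) (-(2 * (b - t))) t := fun t =>
    ((hasDerivAt_id' t).const_sub b |>.fun_pow 2).congr_deriv (by ring)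
  obtain ⟨c, hc, hcauchy⟩ := exists_ratio_hasDerivAt_eq_ratio_slope _ _ hab
    (fun t ht => (hF t ht).continuousAt.continuousWithinAt)
    (fun t ht => hF t (Ioo_subset_Icc_self ht)) _ _ (by fun_prop) (fun t _ => hG t)
  refine ⟨c, hc, mul_left_cancel₀ (sub_ne_zero.2 hc.2.ne') ?_⟩
  linear_combination (1 / 2 : ℝ) * hcauchy

theorem add_smul_mem_segment {E : Type*} [AddCommGroup E] [Module ℝ E] {x d : E} {α t : ℝ}
    (hα : 0 < α) (ht : t ∈ Icc 0 α) : x + t • d ∈ segment ℝ x (x + α • d) := by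
  rw [segment_eq_image']
  refine ⟨t / α, ⟨div_nonneg ht.1 hα.le, (div_le_one hα).2 ht.2⟩, ?_⟩
  simp [smul_smul, div_mul_cancel₀ _ hα.ne']

theorem taylor_lagrange_two_of_segment_subset {E : Type*} [NormedAddCommGroup E]
    [NormedSpace ℝ E] {f : E → ℝ} {U : Set E} (hU : IsOpen U) (hf : ContDiffOn ℝ 2 f U)
    {x d : E} {α : ℝ} (hα : 0 < α) (hseg : segment ℝ x (x + α • d) ⊆ U) :
    ∃ c ∈ Ioo 0 α, f (x + α • d) =
      f x + α * fderiv ℝ f x d + α ^ 2 / 2 * fderiv ℝ (fderiv ℝ f) (x + c • d) d d := by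
  have hmem : ∀ t ∈ Icc 0 α, x + t • d ∈ U := fun t ht => hseg (add_smul_mem_segment hα ht)
  have hline : ∀ t : ℝ, HasDerivAt (fun t : ℝ => x + t • d) d t := fun t => by
    simpa only [hasDerivAt_const_add_iff, id_eq, one_smul] using
      ((hasDerivAt_id t).smul_const d).const_add x
  have hf' : ContDiffOn ℝ 1 (fderiv ℝ f) U := hf.fderiv_of_isOpen hU (by norm_num)
  have hf1 : DifferentiableOn ℝ f U := hf.differentiableOn two_ne_zero
  have hf2 : DifferentiableOn ℝ (fderiv ℝ f) U := hf'.differentiableOn one_ne_zero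
  have hg : ∀ t ∈ Icc 0 α,
      HasDerivAt (fun t => f (x + t • d)) (fderiv ℝ f (x + t • d) d) t := fun t ht =>
    (hf1.differentiableAt (hU.mem_nhds (hmem t ht))).hasFDerivAt.comp_hasDerivAt t (hline t)
  have hg' : ∀ t ∈ Icc 0 α, HasDerivAt (fun t => fderiv ℝ f (x + t • d) d)
      (fderiv ℝ (fderiv ℝ f) (x + t • d) d d) t := fun t ht => by
    have hcomp := (hf2.differentiableAt (hU.mem_nhds (hmem t ht))).hasFDerivAt.comp_hasDerivAt t
      (hline t)
    simpa only [Function.comp_apply, map_zero, add_zero] using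
      hcomp.clm_apply (hasDerivAt_const t d)
  obtain ⟨c, hc, htaylor⟩ := taylor_lagrange_two_of_hasDerivAt hα hg hg'
  simp only [zero_smul, add_zero, sub_zero] at htaylor
  exact ⟨c, hc, htaylor⟩

theorem sub_log_one_add_le {t τ : ℝ} (hτ : τ < 1) (ht : 1 - τ ≤ 1 + t) :
    t - log (1 + t) ≤ t ^ 2 / (1 - τ) := by
  have hpos : 0 < 1 + t := by linarith
  have hlog : 1 - (1 + t)⁻¹ ≤ log (1 + t) := one_sub_inv_le_log_of_pos hpos
  have hsq : t - (1 - (1 + t)⁻¹) = t ^ 2 / (1 + t) := by field_simp; ring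
  calc t - log (1 + t) ≤ t ^ 2 / (1 + t) := by linarith
    _ ≤ t ^ 2 / (1 - τ) := div_le_div_of_nonneg_left (sq_nonneg t) (by linarith) ht

theorem sum_div_sub_sum_log_le {ι : Type*} [Fintype ι] {x d : ι → ℝ} {τ α : ℝ}
    (hx : ∀ i, 0 < x i) (hτ : τ < 1) (hftb : ∀ i, (1 - τ) * x i ≤ x i + α * d i) :
    α * ∑ i, d i / x i - (∑ i, log (x i + α * d i) - ∑ i, log (x i)) ≤
      α ^ 2 / (1 - τ) * ∑ i, (d i / x i) ^ 2 := by
  rw [Finset.mul_sum, Finset.mul_sum, ← Finset.sum_sub_distrib, ← Finset.sum_sub_distrib]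
  refine Finset.sum_le_sum fun i _ => ?_
  have hxi := hx i
  have hsplit : x i + α * d i = x i * (1 + α * (d i / x i)) := by field_simp
  have hstep : 1 - τ ≤ 1 + α * (d i / x i) := by
    rw [← mul_le_mul_iff_of_pos_left hxi, ← hsplit]; linarith [hftb i]
  have hcoord := sub_log_one_add_le hτ hstep
  rw [mul_pow] at hcoord
  rw [hsplit, log_mul hxi.ne' (by linarith), div_mul_eq_mul_div]
  linarith

theorem stmt_19_general (n : ℕ) (f : (Fin n → ℝ) → ℝ) (x d : Fin n → ℝ) (μ τ α : ℝ)
    (hx : ∀ i, 0 < x i) (hμ : 0 < μ) (hτ1 : τ < 1)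
    (hα0 : 0 < α) (hα1 : α ≤ 1)
    (hftb : ∀ i, (1 - τ) * x i ≤ x i + α * d i)
    (U : Set (Fin n → ℝ)) (hUopen : IsOpen U)
    (hseg : segment ℝ x (x + α • d) ⊆ U)
    (hf : ContDiffOn ℝ 2 f U) :
    ∃ a ∈ Set.Ioo (0 : ℝ) 1,
      (f (x + α • d) - μ * ∑ i, Real.log (x i + α * d i)) -
          (f x - μ * ∑ i, Real.log (x i)) ≤
        α * (fderiv ℝ f x d - μ * ∑ i, d i / x i) +
        α ^ 2 / 2 * ((fderiv ℝ (fun y => fderiv ℝ f y) (x + a • d) d) d) +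
        (μ / (1 - τ)) * α ^ 2 * ∑ i, (d i / x i) ^ 2 := by
  obtain ⟨a, ha, htaylor⟩ := taylor_lagrange_two_of_segment_subset hUopen hf hα0 hseg
  have hbarrier := mul_le_mul_of_nonneg_left (sum_div_sub_sum_log_le hx hτ1 hftb) hμ.le
  refine ⟨a, ⟨ha.1, ha.2.trans_le hα1⟩, ?_⟩
  linear_combination htaylor + hbarrier

/-- Taylor-type descent estimate for the barrier function `φ(x) = f(x) - μ∑ log xᵢ`
(Lemma 3.4's inequality (3.7)): if `x > 0`, `τ ∈ (0,1)`, `α ∈ (0,1]` with the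
fraction-to-the-boundary condition `x + αd ≥ (1-τ)x`, and `f` is C² on a convex open
set containing the segment `[x, x+αd]`, then there is `ᾰ ∈ (0,1)` with
`φ(x+αd) - φ(x) ≤ α∇φ(x)ᵀd + (α²/2)dᵀ∇²f(x+ᾰd)d + (μ/(1-τ))α²‖X⁻¹d‖²`. -/
theorem stmt_19 (n : ℕ) (f : (Fin n → ℝ) → ℝ) (x d : Fin n → ℝ) (μ τ α : ℝ)
    (hx : ∀ i, 0 < x i) (hμ : 0 < μ) (hτ0 : 0 < τ) (hτ1 : τ < 1)
    (hα0 : 0 < α) (hα1 : α ≤ 1)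
    (hftb : ∀ i, (1 - τ) * x i ≤ x i + α * d i)
    (U : Set (Fin n → ℝ)) (hUopen : IsOpen U) (hUconv : Convex ℝ U)
    (hseg : segment ℝ x (x + α • d) ⊆ U)
    (hf : ContDiffOn ℝ 2 f U) :
    ∃ a ∈ Set.Ioo (0 : ℝ) 1,
      (f (x + α • d) - μ * ∑ i, Real.log (x i + α * d i)) -
          (f x - μ * ∑ i, Real.log (x i)) ≤
        α * (fderiv ℝ f x d - μ * ∑ i, d i / x i) +
        α ^ 2 / 2 * ((fderiv ℝ (fun y => fderiv ℝ f y) (x + a • d) d) d) +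
        (μ / (1 - τ)) * α ^ 2 * ∑ i, (d i / x i) ^ 2 :=
  stmt_19_general n f x d μ τ α hx hμ hτ1 hα0 hα1 hftb U hUopen hseg hf
end
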